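/- arXiv:1805.10653 — 4 statements merged into one kernel-verified Lean document; each statement's English description precedes it below -/
import Mathlib

section
/- The Legendre transform of Λ(t) = (1-√(1-8t))/4 for t ≤ 1/8 (and +∞ for t > 1/8) evaluated at x > 0 equals (x-1)²/(8x). -/
/-!
Parametrize `t ≤ 1/8` as `t = (1 - s²)/8` with `s = √(1 - 8t) ≥ 0`, so that `Λ t = (1 - s)/4`.
Completing the square gives `t x - Λ t = (x - 1)²/(8x) - (s x - 1)²/(8x)`, so for `x > 0` the
supremum is attained at `s = 1/x`. For `x ≤ 0` the term `t x` is nonnegative when `t ≤ 0`, while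
`-Λ t = (s - 1)/4` is unbounded as `s → ∞`.
-/

open Real

noncomputable def Lambda (t : ℝ) : EReal :=
  if t ≤ 1/8 then (((1 - √(1 - 8*t)) / 4 : ℝ) : EReal) else ⊤

lemma Lambda_of_gt {t : ℝ} (ht : 1/8 < t) : Lambda t = ⊤ :=
  if_neg (not_le.mpr ht)

lemma Lambda_param {s : ℝ} (hs : 0 ≤ s) : Lambda ((1 - s^2)/8) = (((1 - s)/4 : ℝ) : EReal) := by
  have hle : (1 - s^2)/8 ≤ 1/8 := by nlinarith [sq_nonneg s]
  have hsqrt : √(1 - 8 * ((1 - s^2)/8)) = s := by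
    rw [show 1 - 8 * ((1 - s^2)/8) = s^2 by ring, sqrt_sq hs]
  rw [Lambda, if_pos hle, hsqrt]

lemma exists_param_of_le {t : ℝ} (ht : t ≤ 1/8) : ∃ s, 0 ≤ s ∧ t = (1 - s^2)/8 :=
  ⟨√(1 - 8*t), sqrt_nonneg _, by rw [sq_sqrt (by linarith)]; ring⟩

lemma param_mul_sub_eq {x : ℝ} (hx : x ≠ 0) (s : ℝ) :
    (1 - s^2)/8 * x - (1 - s)/4 = (x - 1)^2/(8*x) - (s*x - 1)^2/(8*x) := by
  field_simp
  ring

lemma coe_mul_sub_Lambda_le {x : ℝ} (hx : 0 < x) (t : ℝ) :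
    ((t * x : ℝ) : EReal) - Lambda t ≤ (((x - 1)^2/(8*x) : ℝ) : EReal) := by
  rcases le_or_gt t (1/8) with ht | ht
  · obtain ⟨s, hs, rfl⟩ := exists_param_of_le ht
    rw [Lambda_param hs, ← EReal.coe_sub, EReal.coe_le_coe_iff, param_mul_sub_eq hx.ne']
    have : 0 ≤ (s*x - 1)^2/(8*x) := by positivity
    linarith
  · simp [Lambda_of_gt ht]

lemma iSup_coe_mul_sub_Lambda_of_pos {x : ℝ} (hx : 0 < x) :
    ⨆ t : ℝ, ((t * x : ℝ) : EReal) - Lambda t = (((x - 1)^2/(8*x) : ℝ) : EReal) := by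
  refine le_antisymm (iSup_le (coe_mul_sub_Lambda_le hx)) (le_iSup_of_le ((1 - (1/x)^2)/8) ?_)
  rw [Lambda_param (by positivity), ← EReal.coe_sub, EReal.coe_le_coe_iff,
    param_mul_sub_eq hx.ne', show 1/x * x - 1 = 0 by field_simp; ring]
  simp

lemma iSup_coe_mul_sub_Lambda_of_nonpos {x : ℝ} (hx : x ≤ 0) :
    ⨆ t : ℝ, ((t * x : ℝ) : EReal) - Lambda t = ⊤ := by
  refine EReal.eq_top_iff_forall_lt _ |>.mpr fun r ↦ ?_
  set s := 4 * |r| + 5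
  have hs : 1 ≤ s := by linarith [abs_nonneg r]
  refine lt_of_lt_of_le ?_ (le_iSup _ ((1 - s^2)/8))
  rw [Lambda_param (by linarith), ← EReal.coe_sub, EReal.coe_lt_coe_iff]
  have : 0 ≤ (1 - s^2)/8 * x := mul_nonneg_of_nonpos_of_nonpos (by nlinarith) hx
  linarith [le_abs_self r]

/-- Legendre transform of `Λ(t) = (1 - √(1-8t))/4` for `t ≤ 1/8` (and `+∞` otherwise):
`Λ*(x) = (x-1)²/(8x)` for `x > 0`, and `Λ*(x) = +∞` for `x ≤ 0`. -/
theorem legendre_transform_of_Lambda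
    (Λ : ℝ → EReal)
    (hΛ : ∀ t : ℝ, Λ t = if t ≤ 1/8 then (((1 - Real.sqrt (1 - 8*t)) / 4 : ℝ) : EReal) else ⊤)
    (Λstar : ℝ → EReal)
    (hΛstar : ∀ x : ℝ, Λstar x = ⨆ t : ℝ, (((t * x : ℝ) : EReal) - Λ t)) :
    (∀ x : ℝ, 0 < x → Λstar x = (((x - 1) ^ 2 / (8 * x) : ℝ) : EReal)) ∧
    (∀ x : ℝ, 0 < x → (x - 1) ^ 2 / (8 * x) = x / 8 + 1 / (8 * x) - 1 / 4) ∧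
    (∀ x : ℝ, x ≤ 0 → Λstar x = ⊤) := by
  obtain rfl : Λ = Lambda := funext hΛ
  refine ⟨fun x hx ↦ ?_, fun x hx ↦ ?_, fun x hx ↦ ?_⟩
  · rw [hΛstar, iSup_coe_mul_sub_Lambda_of_pos hx]
  · field_simp
    ring
  · rw [hΛstar, iSup_coe_mul_sub_Lambda_of_nonpos hx]
end

section
/- Gambler's-ruin-type domination: if (S_i) is a simple symmetric random walk started at 0 and (S_i^x) is a simple symmetric random walk started at an even integer x, coupled by reflecting at the first time the second walk hits x/2, then |S_i^x| ≥ |S_i| for all i. -/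
/-!
Write `S̄` through its increments `ξ`. Reflecting the walk in `x/2` up to the hitting time `τ`
amounts to negating the increments `ξ k` with `k < τ`, and whether `ξ k` is negated is decided by
`ξ 0, …, ξ (k-1)`. Such predictable sign changes preserve the joint law of independent symmetric
increments: by induction on `n`, the `n`-th increment is independent of the earlier ones, so
negating it on an event determined by them does not change the joint law. This identifies the
law of `S̄^x`. For the domination, a walk with steps `±1` cannot jump over `x/2`, so before `τ` it
lies on the same side of `x/2` as `0` and hence is at least as close to `0` as its reflection
`x - S̄`; after `τ` the two walks coincide.
-/

open MeasureTheory ProbabilityTheory Finset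
open scoped ENNReal

section Truncate

variable {β : Type*} [Zero β]

def truncate (n : ℕ) (a : ℕ → β) : ℕ → β := fun k => if k < n then a k else 0

lemma truncate_succ (n : ℕ) (a : ℕ → β) :
    truncate (n + 1) a = Function.update (truncate n a) n (a n) := by
  funext k
  rcases lt_trichotomy k n with hk | rfl | hk
  · simp [truncate, hk, hk.ne, Nat.lt_succ_of_lt hk]
  · simp [truncate]
  · simp [truncate, hk.ne', hk.not_gt, (Nat.succ_le_of_lt hk).not_gt]

variable [MeasurableSpace β]

lemma measurable_truncate (n : ℕ) : Measurable (truncate (β := β) n) :=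
  measurable_pi_lambda _ fun k => by
    by_cases hk : k < n
    · simpa [truncate, hk] using measurable_pi_apply k
    · simp [truncate, hk]

lemma MeasureTheory.Measure.ext_of_map_truncate {μ ν : Measure (ℕ → β)} [IsFiniteMeasure μ]
    (h : ∀ n, μ.map (truncate n) = ν.map (truncate n)) : μ = ν := by
  have hcyl : ∀ (I : Finset ℕ) (t : Set (I → β)),
      truncate (I.sup id + 1) ⁻¹' cylinder I t = cylinder I t := by
    intro I t
    ext f
    have hres : I.restrict (truncate (I.sup id + 1) f) = I.restrict f := by
      funext i
      simp [truncate, Nat.lt_succ_of_le (show (i : ℕ) ≤ I.sup id from le_sup (f := id) i.2)]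
    simp only [Set.mem_preimage, mem_cylinder, hres]
  have huniv : μ Set.univ = ν Set.univ := by
    simpa [Measure.map_apply (measurable_truncate 0) MeasurableSet.univ] using
      congrArg (· Set.univ) (h 0)
  refine ext_of_generate_finite _ generateFrom_measurableCylinders.symm
    isPiSystem_measurableCylinders (fun s hs => ?_) huniv
  obtain ⟨I, t, ht, rfl⟩ := (mem_measurableCylinders s).mp hs
  have hmeas := MeasurableSet.cylinder (α := fun _ : ℕ => β) I ht
  rw [← hcyl, ← Measure.map_apply (measurable_truncate _) hmeas, h,
    Measure.map_apply (measurable_truncate _) hmeas]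

lemma ProbabilityTheory.iIndepFun.indepFun_truncate {Ω : Type*} [MeasurableSpace Ω] {P : Measure Ω}
    {ξ : ℕ → Ω → β} (hξ : ∀ k, Measurable (ξ k)) (hind : iIndepFun ξ P) (n : ℕ) :
    IndepFun (fun ω => truncate n (fun k => ξ k ω)) (ξ n) P := by
  have hdisj : Disjoint (range n) {n} := by simp
  let extend : (range n → β) → ℕ → β :=
    fun g k => if h : k < n then g ⟨k, mem_range.mpr h⟩ else 0
  have hextend : Measurable extend := measurable_pi_lambda _ fun k => by
    by_cases h : k < n
    · simpa [extend, h] using measurable_pi_apply (⟨k, mem_range.mpr h⟩ : range n)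
    · simp [extend, h]
  have := (hind.indepFun_finset _ _ hdisj hξ).comp hextend
    (measurable_pi_apply (⟨n, mem_singleton_self n⟩ : ({n} : Finset ℕ)))
  convert this using 1
  · funext ω k
    by_cases h : k < n <;> simp [extend, truncate, h]
  · rfl

end Truncate

open scoped Classical in
noncomputable def negateOn {β : Type*} [Neg β] (F : ℕ → Set (ℕ → β)) (a : ℕ → β) : ℕ → β :=
  fun k => if a ∈ F k then -a k else a k

def DeterminedByPrefix {β : Type*} (F : ℕ → Set (ℕ → β)) : Prop :=
  ∀ k a b, (∀ j < k, a j = b j) → (a ∈ F k ↔ b ∈ F k)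

lemma measurable_negateOn {β : Type*} [Neg β] [MeasurableSpace β] [MeasurableNeg β]
    {F : ℕ → Set (ℕ → β)} (hF : ∀ k, MeasurableSet (F k)) : Measurable (negateOn F) :=
  measurable_pi_lambda _ fun k =>
    Measurable.ite (hF k) (measurable_pi_apply k).neg (measurable_pi_apply k)

open scoped Classical in
lemma map_prod_negIf_eq {α β : Type*} [MeasurableSpace α] [MeasurableSpace β] [Neg β]
    [MeasurableNeg β] (μ : Measure α) [SFinite μ] {ν : Measure β} [SFinite ν]
    (hν : ν.map Neg.neg = ν) {s : Set α} (hs : MeasurableSet s) :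
    (μ.prod ν).map (fun p => (p.1, if p.1 ∈ s then -p.2 else p.2)) = μ.prod ν := by
  set F := fun p : α × β => (p.1, if p.1 ∈ s then -p.2 else p.2)
  have hmeas : Measurable F :=
    measurable_fst.prodMk (Measurable.ite (measurable_fst hs) measurable_snd.neg measurable_snd)
  ext E hE
  rw [Measure.map_apply hmeas hE, Measure.prod_apply (hmeas hE), Measure.prod_apply hE]
  refine lintegral_congr fun a => ?_
  by_cases ha : a ∈ s
  · have hsec : Prod.mk a ⁻¹' (F ⁻¹' E) = Neg.neg ⁻¹' (Prod.mk a ⁻¹' E) := by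
      ext y; simp [F, ha]
    rw [hsec, ← Measure.map_apply measurable_neg (measurable_prodMk_left hE), hν]
  · have hsec : Prod.mk a ⁻¹' (F ⁻¹' E) = Prod.mk a ⁻¹' E := by
      ext y; simp [F, ha]
    rw [hsec]

section Predictable

variable {β : Type*} [Zero β] [Neg β] {F : ℕ → Set (ℕ → β)}
  (hpred : DeterminedByPrefix F)
include hpred

omit [Neg β] in
lemma mem_iff_truncate_mem {k n : ℕ} (hk : k ≤ n) (a : ℕ → β) : truncate n a ∈ F k ↔ a ∈ F k :=
  hpred k _ _ fun _ hj => if_pos (hj.trans_le hk)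

open scoped Classical in
lemma truncate_negateOn_truncate (n : ℕ) (a : ℕ → β) :
    truncate n (negateOn F (truncate n a)) = truncate n (negateOn F a) := by
  funext k
  by_cases hk : k < n
  · simp only [truncate, negateOn, hk, if_true]
    exact if_congr (mem_iff_truncate_mem hpred hk.le a) rfl rfl
  · simp only [truncate, hk, if_false]

open scoped Classical in
lemma truncate_succ_negateOn (n : ℕ) (a : ℕ → β) :
    truncate (n + 1) (negateOn F a)
      = Function.update (truncate n (negateOn F (truncate n a))) n
          (if truncate n a ∈ F n then -a n else a n) := by
  rw [truncate_succ, truncate_negateOn_truncate hpred, mem_iff_truncate_mem hpred le_rfl]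
  rfl

end Predictable

section Law

variable {β : Type*} [Zero β] [Neg β] [MeasurableSpace β] [MeasurableNeg β]
  {Ω : Type*} [MeasurableSpace Ω] {P : Measure Ω} [IsProbabilityMeasure P] {ξ : ℕ → Ω → β}
  {F : ℕ → Set (ℕ → β)}

open scoped Classical in
theorem map_truncate_negateOn_eq (hξ : ∀ k, Measurable (ξ k)) (hind : iIndepFun ξ P)
    (hsymm : ∀ k, (P.map (ξ k)).map Neg.neg = P.map (ξ k)) (hF : ∀ k, MeasurableSet (F k))
    (hpred : DeterminedByPrefix F) (n : ℕ) :
    P.map (fun ω => truncate n (negateOn F (fun k => ξ k ω)))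
      = P.map (fun ω => truncate n (fun k => ξ k ω)) := by
  induction n with
  | zero => rfl
  | succ n ih =>
    set X := fun ω => truncate n (fun k => ξ k ω)
    have hX : Measurable X := (measurable_truncate n).comp (measurable_pi_lambda _ hξ)
    let G : (ℕ → β) → ℕ → β := truncate n ∘ negateOn F
    have hG : Measurable G := (measurable_truncate n).comp (measurable_negateOn hF)
    have hGX : G ∘ X = fun ω => truncate n (negateOn F (fun k => ξ k ω)) :=
      funext fun ω => truncate_negateOn_truncate hpred n _
    let glue : (ℕ → β) × β → ℕ → β := fun p => Function.update p.1 n p.2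
    have hglue : Measurable glue := measurable_update' (a := n)
    let T : (ℕ → β) × β → (ℕ → β) × β := fun p => (p.1, if p.1 ∈ F n then -p.2 else p.2)
    have hT : Measurable T := measurable_fst.prodMk
      (Measurable.ite (measurable_fst (hF n)) measurable_snd.neg measurable_snd)
    have hXY : Measurable fun ω => (X ω, ξ n ω) := hX.prodMk (hξ n)
    have hpair : P.map (fun ω => (X ω, ξ n ω)) = (P.map X).prod (P.map (ξ n)) :=
      (indepFun_iff_map_prod_eq_prod_map_map hX.aemeasurable (hξ n).aemeasurable).mp
        (hind.indepFun_truncate hξ n)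
    calc P.map (fun ω => truncate (n + 1) (negateOn F (fun k => ξ k ω)))
        = ((P.map fun ω => (X ω, ξ n ω)).map T).map (glue ∘ Prod.map G id) := by
          rw [Measure.map_map hT hXY, Measure.map_map (hglue.comp (hG.prodMap measurable_id))
            (hT.comp hXY)]
          congr 1
          funext ω
          exact truncate_succ_negateOn hpred n _
      _ = (((P.map X).map G).prod (P.map (ξ n))).map glue := by
          rw [hpair, map_prod_negIf_eq _ (hsymm n) (hF n), ← Measure.map_map hglue
            (hG.prodMap measurable_id), ← Measure.map_prod_map _ _ hG measurable_id, Measure.map_id]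
      _ = P.map (fun ω => truncate (n + 1) (fun k => ξ k ω)) := by
          rw [Measure.map_map hG hX, hGX, ih, ← hpair, Measure.map_map hglue hXY]
          congr 1
          funext ω
          exact (truncate_succ n _).symm

theorem map_negateOn_eq (hξ : ∀ k, Measurable (ξ k)) (hind : iIndepFun ξ P)
    (hsymm : ∀ k, (P.map (ξ k)).map Neg.neg = P.map (ξ k)) (hF : ∀ k, MeasurableSet (F k))
    (hpred : DeterminedByPrefix F) :
    P.map (fun ω => negateOn F (fun k => ξ k ω)) = P.map (fun ω k => ξ k ω) := by
  have hv : Measurable fun ω k => ξ k ω := measurable_pi_lambda _ hξ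
  have hflip : Measurable fun ω => negateOn F (fun k => ξ k ω) := (measurable_negateOn hF).comp hv
  have := Measure.isProbabilityMeasure_map (μ := P) hflip.aemeasurable
  refine Measure.ext_of_map_truncate fun n => ?_
  rw [Measure.map_map (measurable_truncate n) hflip, Measure.map_map (measurable_truncate n) hv]
  exact map_truncate_negateOn_eq hξ hind hsymm hF hpred n

end Law

def AvoidsUpTo (m : ℤ) (a : ℕ → ℤ) (k : ℕ) : Prop := ∀ j ≤ k, ∑ l ∈ range j, a l ≠ m

instance (m : ℤ) (a : ℕ → ℤ) (k : ℕ) : Decidable (AvoidsUpTo m a k) :=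
  inferInstanceAs (Decidable (∀ j ≤ k, _))

namespace AvoidsUpTo

variable {m : ℤ} {a b : ℕ → ℤ} {k : ℕ}

lemma zero_iff : AvoidsUpTo m a 0 ↔ m ≠ 0 := by
  simp [AvoidsUpTo, eq_comm]

lemma succ_iff : AvoidsUpTo m a (k + 1) ↔ AvoidsUpTo m a k ∧ ∑ l ∈ range (k + 1), a l ≠ m := by
  simp only [AvoidsUpTo, Nat.le_succ_iff, or_imp, forall_and, forall_eq]

lemma of_succ (h : AvoidsUpTo m a (k + 1)) : AvoidsUpTo m a k := (succ_iff.mp h).1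

/-- A walk with steps in `[-1, 1]` cannot jump over `m`. -/
lemma sameSide (ha : ∀ l, |a l| ≤ 1) (h : AvoidsUpTo m a k) :
    (0 < m → ∑ l ∈ range k, a l < m) ∧ (m < 0 → m < ∑ l ∈ range k, a l) := by
  induction k with
  | zero => simp
  | succ k ih =>
    obtain ⟨hk, hne⟩ := succ_iff.mp h
    have hstep := abs_le.mp (ha k)
    rw [sum_range_succ] at hne ⊢
    have := ih hk
    omega

lemma abs_sum_le (ha : ∀ l, |a l| ≤ 1) (h : AvoidsUpTo m a k) :
    |∑ l ∈ range k, a l| ≤ |2 * m - ∑ l ∈ range k, a l| := by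
  have hm : m ≠ 0 := zero_iff.mp fun j hj => h j (by omega)
  obtain ⟨hpos, hneg⟩ := h.sameSide ha
  rcases abs_cases (∑ l ∈ range k, a l) with ⟨e1, _⟩ | ⟨e1, _⟩ <;>
    rcases abs_cases (2 * m - ∑ l ∈ range k, a l) with ⟨e2, _⟩ | ⟨e2, _⟩ <;> omega

lemma congr (h : ∀ j < k, a j = b j) : AvoidsUpTo m a k ↔ AvoidsUpTo m b k :=
  forall₂_congr fun j hj => by
    rw [sum_congr rfl fun l hl => h l ((mem_range.mp hl).trans_le hj)]

lemma measurableSet_setOf (m : ℤ) (k : ℕ) : MeasurableSet {a | AvoidsUpTo m a k} := by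
  simp only [AvoidsUpTo, Set.ofPred_forall]
  exact .iInter fun j => .iInter fun _ =>
    (Finset.measurable_sum _ fun l _ => measurable_pi_apply l) (measurableSet_singleton m).compl

end AvoidsUpTo

/-- The walk `S̄^x` of the statement, for `x = 2 * m` and increments `a`. -/
def reflectAt (m : ℤ) (a : ℕ → ℤ) (i : ℕ) : ℤ :=
  if AvoidsUpTo m a i then 2 * m - ∑ l ∈ range i, a l else ∑ l ∈ range i, a l

lemma reflectAt_eq_add_sum_negateOn (m : ℤ) (a : ℕ → ℤ) (i : ℕ) :
    reflectAt m a i = 2 * m + ∑ l ∈ range i, negateOn (fun k => {b | AvoidsUpTo m b k}) a l := by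
  induction i with
  | zero =>
    by_cases h : AvoidsUpTo m a 0
    · simp [reflectAt, h]
    · simp [reflectAt, AvoidsUpTo.zero_iff.not_left.mp h]
  | succ i ih =>
    rw [sum_range_succ, ← add_assoc, ← ih, reflectAt, reflectAt, sum_range_succ]
    by_cases hi : AvoidsUpTo m a i
    · have hflip : negateOn (fun k => {b | AvoidsUpTo m b k}) a i = -a i := if_pos hi
      rw [if_pos hi, hflip]
      by_cases hs : AvoidsUpTo m a (i + 1)
      · rw [if_pos hs]; ring
      · have hhit : ∑ l ∈ range i, a l + a i = m := by
          rw [← sum_range_succ]; by_contra hne; exact hs (AvoidsUpTo.succ_iff.mpr ⟨hi, hne⟩)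
        rw [if_neg hs]; omega
    · have hkeep : negateOn (fun k => {b | AvoidsUpTo m b k}) a i = a i := if_neg hi
      rw [if_neg hi, hkeep, if_neg fun hs => hi hs.of_succ]

lemma abs_sum_le_abs_reflectAt {m : ℤ} {a : ℕ → ℤ} (ha : ∀ l, |a l| ≤ 1) (i : ℕ) :
    |∑ l ∈ range i, a l| ≤ |reflectAt m a i| := by
  unfold reflectAt
  split_ifs with h
  · exact h.abs_sum_le ha
  · exact le_rfl

theorem map_reflectAt_eq {Ω : Type*} [MeasurableSpace Ω] {P : Measure Ω} [IsProbabilityMeasure P]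
    {ξ : ℕ → Ω → ℤ} (hξ : ∀ k, Measurable (ξ k)) (hind : iIndepFun ξ P)
    (hsymm : ∀ k, (P.map (ξ k)).map Neg.neg = P.map (ξ k)) (m : ℤ) :
    P.map (fun ω i => reflectAt m (fun k => ξ k ω) i)
      = P.map (fun ω i => 2 * m + ∑ l ∈ range i, ξ l ω) := by
  let walk : (ℕ → ℤ) → ℕ → ℤ := fun a i => 2 * m + ∑ l ∈ range i, a l
  have hwalk : Measurable walk := measurable_pi_lambda _ fun i =>
    measurable_const.add (Finset.measurable_sum _ fun l _ => measurable_pi_apply l)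
  have hv : Measurable fun ω k => ξ k ω := measurable_pi_lambda _ hξ
  have hF := AvoidsUpTo.measurableSet_setOf m
  have hflip : Measurable fun ω => negateOn (fun k => {b | AvoidsUpTo m b k}) (fun k => ξ k ω) :=
    (measurable_negateOn hF).comp hv
  calc P.map (fun ω i => reflectAt m (fun k => ξ k ω) i)
      = (P.map fun ω => negateOn (fun k => {b | AvoidsUpTo m b k}) (fun k => ξ k ω)).map walk := by
        rw [Measure.map_map hwalk hflip]
        simp only [reflectAt_eq_add_sum_negateOn]
        rfl
    _ = P.map (fun ω i => 2 * m + ∑ l ∈ range i, ξ l ω) := by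
        rw [map_negateOn_eq hξ hind hsymm hF fun k a b => AvoidsUpTo.congr,
          Measure.map_map hwalk hv]
        rfl

lemma map_neg_half_dirac_one_add_half_dirac_neg_one :
    ((1 / 2 : ℝ≥0∞) • Measure.dirac (1 : ℤ) + (1 / 2 : ℝ≥0∞) • Measure.dirac (-1 : ℤ)).map Neg.neg
      = (1 / 2 : ℝ≥0∞) • Measure.dirac (1 : ℤ) + (1 / 2 : ℝ≥0∞) • Measure.dirac (-1 : ℤ) := by
  rw [Measure.map_add _ _ measurable_neg, Measure.map_smul, Measure.map_smul,
    Measure.map_dirac' measurable_neg, Measure.map_dirac' measurable_neg, neg_neg, add_comm]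

lemma ae_abs_le_one_of_map_eq {Ω : Type*} [MeasurableSpace Ω] {P : Measure Ω} {Y : Ω → ℤ}
    (hY : Measurable Y) (hd : P.map Y
      = (1 / 2 : ℝ≥0∞) • Measure.dirac (1 : ℤ) + (1 / 2 : ℝ≥0∞) • Measure.dirac (-1 : ℤ)) :
    ∀ᵐ ω ∂P, |Y ω| ≤ 1 := by
  refine ae_of_ae_map (p := fun y : ℤ => |y| ≤ 1) hY.aemeasurable ?_
  rw [hd, ae_add_measure_iff]
  constructor <;> refine Measure.ae_smul_measure ?_ _ <;> simp

/-- Reflection coupling: if `S̄` is a simple symmetric random walk started at `0`, `x` is an even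
integer, and `S̄^x` is obtained by reflecting (`S̄^x_i = x - S̄_i`) until the first time `S̄`
hits `x/2` and following `S̄` afterwards, then `S̄^x` is a simple symmetric random walk started
at `x`, and `|S̄^x_i| ≥ |S̄_i|` for all `i`. -/
theorem reflection_coupling_domination
    {Ω : Type*} [MeasurableSpace Ω] (P : Measure Ω) [IsProbabilityMeasure P]
    (ξ : ℕ → Ω → ℤ)
    (hξm : ∀ k, Measurable (ξ k))
    (hindep : iIndepFun ξ P)
    (hdist : ∀ k, Measure.map (ξ k) P
      = (1/2 : ℝ≥0∞) • Measure.dirac (1 : ℤ) + (1/2 : ℝ≥0∞) • Measure.dirac (-1 : ℤ))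
    (S : ℕ → Ω → ℤ) (hS : ∀ i ω, S i ω = ∑ k ∈ Finset.range i, ξ k ω)
    (x : ℤ) (hx : Even x)
    (Sx : ℕ → Ω → ℤ)
    (hSx : ∀ i ω, Sx i ω = if ∀ k ≤ i, S k ω ≠ x / 2 then x - S i ω else S i ω) :
    Measure.map (fun ω => fun i => Sx i ω) P
      = Measure.map (fun ω => fun i => x + S i ω) P ∧
    ∀ᵐ ω ∂P, ∀ i, |S i ω| ≤ |Sx i ω| := by
  obtain ⟨m, rfl⟩ := even_iff_two_dvd.mp hx
  have hSx' : ∀ i ω, Sx i ω = reflectAt m (fun k => ξ k ω) i := by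
    intro i ω
    have hm : 2 * m / 2 = m := by omega
    simp only [hSx, hS, hm]
    rfl
  have hsymm : ∀ k, (P.map (ξ k)).map Neg.neg = P.map (ξ k) := fun k => by
    rw [hdist k, map_neg_half_dirac_one_add_half_dirac_neg_one]
  refine ⟨?_, ?_⟩
  · simp only [hSx', hS]
    exact map_reflectAt_eq hξm hindep hsymm m
  · filter_upwards [ae_all_iff.mpr fun k => ae_abs_le_one_of_map_eq (hξm k) (hdist k)]
      with ω hω i
    rw [hSx', hS]
    exact abs_sum_le_abs_reflectAt hω i
end

section
/- For the integral ∫_0^∞ ln(1 + 8t/(1+y²)) dy with t > -1/8, the value equals π(√(1+8t) - 1). -/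
/-!
With `a = √(1 + 8t)` and `b = 1` the integrand is `log (a² + y²) - log (b² + y²)`, and
`log (a² + y²)` has the elementary primitive `y log (a² + y²) - 2y + 2a arctan (y / a)`.
The difference of the logarithms is `O(1 / y²)`, so the integral converges and
`y (log (a² + y²) - log (b² + y²)) → 0`; at infinity only the arctangent terms survive,
contributing `aπ - bπ`.
-/

open Real MeasureTheory Filter Topology Set

namespace Real

lemma log_sub_log_le_sub_div {x z : ℝ} (hx : 0 < x) (hz : 0 < z) :
    log x - log z ≤ (x - z) / z := by
  have h := log_le_sub_one_of_pos (div_pos hx hz)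
  rwa [log_div hx.ne' hz.ne', ← div_self hz.ne', ← sub_div] at h

lemma abs_log_sub_log_le_abs_sub_div_min {x z : ℝ} (hx : 0 < x) (hz : 0 < z) :
    |log x - log z| ≤ |x - z| / min x z := by
  have hmin : 0 < min x z := lt_min hx hz
  have bound {u v : ℝ} (hu : 0 < u) (hv : 0 < v) (hvmin : min x z ≤ v)
      (huv : |u - v| = |x - z|) :
      log u - log v ≤ |x - z| / min x z :=
    calc log u - log v ≤ (u - v) / v := log_sub_log_le_sub_div hu hv
      _ ≤ |u - v| / v := div_le_div_of_nonneg_right (le_abs_self _) hv.le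
      _ ≤ |x - z| / min x z := by
        rw [huv]; exact div_le_div_of_nonneg_left (abs_nonneg _) hmin hvmin
  rw [abs_le]
  constructor
  · linarith [bound hz hx (min_le_left x z) (abs_sub_comm z x)]
  · exact bound hx hz (min_le_right x z) rfl

end Real

section LogAddSq

variable {p q : ℝ}

lemma abs_log_add_sq_sub_log_add_sq_le (hp : 0 < p) (hq : 0 < q) (y : ℝ) :
    |log (p + y ^ 2) - log (q + y ^ 2)| ≤ |p - q| / (min p q + y ^ 2) := by
  have h := abs_log_sub_log_le_abs_sub_div_min (x := p + y ^ 2) (z := q + y ^ 2)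
    (by positivity) (by positivity)
  rwa [min_add_add_right, add_sub_add_right_eq_sub] at h

lemma integrable_log_add_sq_sub_log_add_sq (hp : 0 < p) (hq : 0 < q) :
    Integrable fun y : ℝ ↦ log (p + y ^ 2) - log (q + y ^ 2) := by
  set m := min (min p q) 1
  have hm : 0 < m := lt_min (lt_min hp hq) one_pos
  refine (integrable_inv_one_add_sq.const_mul (|p - q| / m)).mono'
    (Continuous.aestronglyMeasurable (by fun_prop (disch := intro y; positivity)))
    (Eventually.of_forall fun y ↦ ?_)
  have hmy : m * (1 + y ^ 2) ≤ min p q + y ^ 2 := by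
    nlinarith [min_le_left (min p q) 1, min_le_right (min p q) 1, sq_nonneg y]
  calc ‖log (p + y ^ 2) - log (q + y ^ 2)‖ ≤ |p - q| / (min p q + y ^ 2) :=
        abs_log_add_sq_sub_log_add_sq_le hp hq y
    _ ≤ |p - q| / (m * (1 + y ^ 2)) :=
        div_le_div_of_nonneg_left (abs_nonneg _) (by positivity) hmy
    _ = |p - q| / m * (1 + y ^ 2)⁻¹ := by rw [div_mul_eq_div_div, div_eq_mul_inv]

lemma tendsto_mul_log_add_sq_sub_log_add_sq_atTop (hp : 0 < p) (hq : 0 < q) :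
    Tendsto (fun y : ℝ ↦ y * (log (p + y ^ 2) - log (q + y ^ 2))) atTop (𝓝 0) := by
  have hdecay : Tendsto (fun y : ℝ ↦ |p - q| * y⁻¹) atTop (𝓝 0) := by
    simpa using tendsto_inv_atTop_zero.const_mul |p - q|
  refine squeeze_zero_norm' ?_ hdecay
  filter_upwards [eventually_gt_atTop 0] with y hy
  have hpq : 0 < min p q := lt_min hp hq
  calc ‖y * (log (p + y ^ 2) - log (q + y ^ 2))‖
      ≤ y * (|p - q| / (min p q + y ^ 2)) := by
        rw [norm_mul, norm_of_nonneg hy.le]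
        exact mul_le_mul_of_nonneg_left (abs_log_add_sq_sub_log_add_sq_le hp hq y) hy.le
    _ ≤ y * (|p - q| / (y * y)) := by
        gcongr
        nlinarith
    _ = |p - q| * y⁻¹ := by field_simp

end LogAddSq

noncomputable def logSqAddSqPrimitive (a y : ℝ) : ℝ :=
  y * log (a ^ 2 + y ^ 2) - 2 * y + 2 * a * arctan (y / a)

lemma hasDerivAt_logSqAddSqPrimitive {a : ℝ} (ha : a ≠ 0) (y : ℝ) :
    HasDerivAt (logSqAddSqPrimitive a) (log (a ^ 2 + y ^ 2)) y := by
  have hpos : 0 < a ^ 2 + y ^ 2 := by positivity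
  have hlog : HasDerivAt (fun y ↦ log (a ^ 2 + y ^ 2)) (2 * y / (a ^ 2 + y ^ 2)) y := by
    simpa using ((hasDerivAt_pow 2 y).const_add (a ^ 2)).log hpos.ne'
  have harctan : HasDerivAt (fun y ↦ arctan (y / a)) (1 / (1 + (y / a) ^ 2) * (1 / a)) y :=
    ((hasDerivAt_id' y).div_const a).arctan
  refine ((((hasDerivAt_id' y).mul hlog).sub ((hasDerivAt_id' y).const_mul 2)).add
    (harctan.const_mul (2 * a))).congr_deriv ?_
  field_simp
  ring

theorem integral_Ioi_log_sq_add_sq_sub_log_sq_add_sq {a b : ℝ} (ha : 0 < a) (hb : 0 < b) :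
    ∫ y in Ioi (0 : ℝ), (log (a ^ 2 + y ^ 2) - log (b ^ 2 + y ^ 2)) = π * (a - b) := by
  have hF : ∀ y, logSqAddSqPrimitive a y - logSqAddSqPrimitive b y
      = y * (log (a ^ 2 + y ^ 2) - log (b ^ 2 + y ^ 2))
        + 2 * a * arctan (y / a) - 2 * b * arctan (y / b) := fun y ↦ by
    unfold logSqAddSqPrimitive; ring
  have harctan {c : ℝ} (hc : 0 < c) :
      Tendsto (fun y ↦ 2 * c * arctan (y / c)) atTop (𝓝 (2 * c * (π / 2))) :=
    ((tendsto_arctan_atTop.mono_right nhdsWithin_le_nhds).comp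
      (tendsto_id.atTop_div_const hc)).const_mul _
  have hlim : Tendsto (fun y ↦ logSqAddSqPrimitive a y - logSqAddSqPrimitive b y) atTop
      (𝓝 (0 + 2 * a * (π / 2) - 2 * b * (π / 2))) := by
    simp_rw [hF]
    exact ((tendsto_mul_log_add_sq_sub_log_add_sq_atTop (by positivity) (by positivity)).add
      (harctan ha)).sub (harctan hb)
  have h := integral_Ioi_of_hasDerivAt_of_tendsto' (a := 0)
    (fun y _ ↦ (hasDerivAt_logSqAddSqPrimitive ha.ne' y).sub
      (hasDerivAt_logSqAddSqPrimitive hb.ne' y))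
    (integrable_log_add_sq_sub_log_add_sq (by positivity) (by positivity)).integrableOn hlim
  rw [h, Pi.sub_apply, hF]
  simp only [zero_mul, zero_div, arctan_zero, mul_zero, sub_zero, zero_add]
  ring

/-- `∫_0^∞ [ln(1+8t+y²) - ln(1+y²)] dy = π(√(1+8t) - 1)` for `t > -1/8`. -/
theorem integral_log_ratio (t : ℝ) (ht : -1/8 < t) :
    ∫ y in Set.Ioi (0 : ℝ), (Real.log (1 + 8*t + y^2) - Real.log (1 + y^2))
      = Real.pi * (Real.sqrt (1 + 8*t) - 1) := by
  have h8 : 0 < 1 + 8 * t := by linarith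
  have h := integral_Ioi_log_sq_add_sq_sub_log_sq_add_sq (sqrt_pos.2 h8) one_pos
  rwa [sq_sqrt h8.le, one_pow] at h
end

section
/- If L''_n denotes the sum Σ_{i=A+1}^n (S_i - S_A)²/i² for a simple symmetric random walk S, then L''_n is stochastically smaller than L'_n = Σ_{i=A+1}^n S_i²/i²: for every y ≥ 0, P(L'_n ≤ y) ≤ P(L''_n ≤ y). -/
/-!
The first `n` steps of the walk are uniformly distributed on `{1, -1}ⁿ`, so it suffices to inject
the step vectors with `L' ≤ y` into those with `L'' ≤ y`. The injection keeps the first `A` steps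
and afterwards flips the sign of a step exactly when the restarted walk `Dᵢ` (with `D_A = 0`) lies
on the opposite side of the origin from `Sᵢ`; the new vector has `Sᵢ - S_A = Dᵢ`. The coupling
preserves `|Dᵢ| ≤ |Sᵢ|`: since `A` is even, `Sᵢ - Dᵢ` is even, so either `|Dᵢ| ≤ |Sᵢ| - 2`, or
`Dᵢ = ±Sᵢ` and the rule makes `D` move like `S` or like its mirror image. The flip at each step
depends only on the past, so the original steps can be recovered one at a time.
-/

open MeasureTheory ProbabilityTheory
open scoped ENNReal

namespace RandomWalk

open Finset

def walk (s : ℕ → ℤ) (i : ℕ) : ℤ := ∑ k ∈ range i, s k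

lemma walk_succ (s : ℕ → ℤ) (k : ℕ) : walk s (k + 1) = walk s k + s k :=
  sum_range_succ _ _

lemma walk_congr {s u : ℕ → ℤ} {i : ℕ} (h : ∀ k < i, s k = u k) : walk s i = walk u i :=
  sum_congr rfl fun k hk => h k (mem_range.mp hk)

lemma even_walk_sub {s : ℕ → ℤ} (hs : ∀ k, s k = 1 ∨ s k = -1) (i : ℕ) :
    Even (walk s i - i) := by
  induction i with
  | zero => simp [walk]
  | succ i ih =>
    rw [walk_succ]
    push_cast
    rcases hs i with h | h <;> rw [h] <;> grind

def flipSign (S D : ℤ) : ℤ := if S * D < 0 then -1 else 1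

lemma flipSign_eq_one_or_neg_one (S D : ℤ) : flipSign S D = 1 ∨ flipSign S D = -1 := by
  unfold flipSign
  split_ifs <;> simp

lemma abs_add_flipSign_mul_le {S D x : ℤ} (hx : x = 1 ∨ x = -1) (hDS : |D| ≤ |S|)
    (hSD : Even (S - D)) : |D + flipSign S D * x| ≤ |S + x| := by
  unfold flipSign
  split_ifs with h
  · rcases mul_neg_iff.mp h with h | h <;> rcases hx with rfl | rfl <;> grind
  · rcases mul_nonneg_iff.mp (not_lt.mp h) with h | h <;> rcases hx with rfl | rfl <;> grind

def coupledWalk (A : ℕ) (s : ℕ → ℤ) : ℕ → ℤ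
  | 0 => 0
  | k + 1 => if k < A then 0 else
      coupledWalk A s k + flipSign (walk s k) (coupledWalk A s k) * s k

def coupledSteps (A : ℕ) (s : ℕ → ℤ) (k : ℕ) : ℤ :=
  if k < A then s k else flipSign (walk s k) (coupledWalk A s k) * s k

section Coupling

variable {A : ℕ} {s : ℕ → ℤ}

lemma coupledWalk_of_le : ∀ {k}, k ≤ A → coupledWalk A s k = 0
  | 0, _ => rfl
  | _ + 1, h => if_pos (Nat.lt_of_succ_le h)

lemma coupledWalk_succ {k : ℕ} (h : A ≤ k) :
    coupledWalk A s (k + 1) =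
      coupledWalk A s k + flipSign (walk s k) (coupledWalk A s k) * s k :=
  if_neg (Nat.not_lt.mpr h)

lemma coupledWalk_eq_walk_coupledSteps_sub {i : ℕ} (h : A ≤ i) :
    coupledWalk A s i = walk (coupledSteps A s) i - walk (coupledSteps A s) A := by
  induction i, h using Nat.le_induction with
  | base => simp [coupledWalk_of_le]
  | succ i hi ih =>
    rw [coupledWalk_succ hi, walk_succ, coupledSteps, if_neg (Nat.not_lt.mpr hi), ih]
    ring

lemma coupledSteps_eq_one_or_neg_one (hs : ∀ k, s k = 1 ∨ s k = -1) (k : ℕ) :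
    coupledSteps A s k = 1 ∨ coupledSteps A s k = -1 := by
  unfold coupledSteps
  split_ifs
  · exact hs k
  · rcases flipSign_eq_one_or_neg_one (walk s k) (coupledWalk A s k) with h | h <;>
      rcases hs k with h' | h' <;> simp [h, h']

lemma coupledWalk_congr {u : ℕ → ℤ} : ∀ {i}, (∀ k < i, s k = u k) →
    coupledWalk A s i = coupledWalk A u i
  | 0, _ => rfl
  | i + 1, h => by
    have hw : walk s i = walk u i := walk_congr fun k hk => h k (by omega)
    have hc : coupledWalk A s i = coupledWalk A u i := coupledWalk_congr fun k hk => h k (by omega)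
    simp only [coupledWalk, hw, hc, h i (by omega)]

lemma eq_of_coupledSteps_eq {u : ℕ → ℤ} {n : ℕ}
    (h : ∀ k < n, coupledSteps A s k = coupledSteps A u k) : ∀ k < n, s k = u k := by
  induction n with
  | zero => intro k hk; omega
  | succ n ih =>
    have ih := ih fun k hk => h k (by omega)
    intro k hk
    rcases Nat.lt_succ_iff_lt_or_eq.mp hk with hk | rfl
    · exact ih k hk
    · have hsk := h k hk
      unfold coupledSteps at hsk
      split_ifs at hsk
      · exact hsk
      · rw [walk_congr ih, coupledWalk_congr ih] at hsk
        rcases flipSign_eq_one_or_neg_one (walk u k) (coupledWalk A u k) with hσ | hσ <;>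
          rw [hσ] at hsk <;> linarith

lemma even_walk_sub_coupledWalk (hA : Even A) (hs : ∀ k, s k = 1 ∨ s k = -1) {i : ℕ}
    (h : A ≤ i) : Even (walk s i - coupledWalk A s i) := by
  induction i, h using Nat.le_induction with
  | base =>
    rw [coupledWalk_of_le le_rfl, sub_zero]
    simpa using (even_walk_sub hs A).add (hA.natCast (α := ℤ))
  | succ i hi ih =>
    rw [walk_succ, coupledWalk_succ hi]
    rcases flipSign_eq_one_or_neg_one (walk s i) (coupledWalk A s i) with hσ | hσ <;>
      rw [hσ] <;> grind

lemma abs_coupledWalk_le (hA : Even A) (hs : ∀ k, s k = 1 ∨ s k = -1) {i : ℕ} (h : A ≤ i) :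
    |coupledWalk A s i| ≤ |walk s i| := by
  induction i, h using Nat.le_induction with
  | base => simp [coupledWalk_of_le]
  | succ i hi ih =>
    rw [walk_succ, coupledWalk_succ hi]
    exact abs_add_flipSign_mul_le (hs i) ih (even_walk_sub_coupledWalk hA hs hi)

end Coupling

def signVectors (n : ℕ) : Finset (Fin n → ℤ) := Fintype.piFinset fun _ => {1, -1}

lemma card_signVectors (n : ℕ) : #(signVectors n) = 2 ^ n := by
  simp [signVectors]

/-- The value `1` beyond `n` only serves to keep the padded sequence a sign sequence. -/
def padSigns {n : ℕ} (v : Fin n → ℤ) (k : ℕ) : ℤ := if h : k < n then v ⟨k, h⟩ else 1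

lemma padSigns_eq_one_or_neg_one {n : ℕ} {v : Fin n → ℤ} (hv : v ∈ signVectors n) (k : ℕ) :
    padSigns v k = 1 ∨ padSigns v k = -1 := by
  unfold padSigns
  split_ifs with hk
  · simpa [signVectors] using Fintype.mem_piFinset.mp hv ⟨k, hk⟩
  · exact .inl rfl

lemma walk_padSigns_of_le {n i : ℕ} (x : ℕ → ℤ) (hi : i ≤ n) :
    walk (padSigns fun k : Fin n => x k) i = walk x i :=
  walk_congr fun k hk => by simp [padSigns, hk.trans_le hi]

noncomputable def weightedSqSum (A n : ℕ) (w : ℕ → ℤ) : ℝ :=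
  ∑ i ∈ Ioc A n, (w i : ℝ) ^ 2 / (i : ℝ) ^ 2

lemma weightedSqSum_le_of_abs_le {A n : ℕ} {w w' : ℕ → ℤ}
    (h : ∀ i ∈ Ioc A n, |w i| ≤ |w' i|) : weightedSqSum A n w ≤ weightedSqSum A n w' := by
  refine sum_le_sum fun i hi => ?_
  have hsq : (w i : ℝ) ^ 2 ≤ (w' i : ℝ) ^ 2 := by exact_mod_cast sq_le_sq.mpr (h i hi)
  exact div_le_div_of_nonneg_right hsq (by positivity)

lemma card_weightedSqSum_le_card_weightedSqSum_sub {A n : ℕ} (hA : Even A) (y : ℝ) :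
    #{v ∈ signVectors n | weightedSqSum A n (walk (padSigns v)) ≤ y} ≤
      #{v ∈ signVectors n |
        weightedSqSum A n (fun i => walk (padSigns v) i - walk (padSigns v) A) ≤ y} := by
  let T : (Fin n → ℤ) → (Fin n → ℤ) := fun v k => coupledSteps A (padSigns v) k
  have hpadT : ∀ v, ∀ k < n, padSigns (T v) k = coupledSteps A (padSigns v) k :=
    fun v k hk => dif_pos hk
  refine card_le_card_of_injOn T (fun v hv => ?_) (fun v hv u hu huv => ?_)
  · simp only [coe_filter, Set.mem_ofPred_eq] at hv ⊢
    have hs := padSigns_eq_one_or_neg_one hv.1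
    refine ⟨Fintype.mem_piFinset.mpr fun k => ?_, le_trans (weightedSqSum_le_of_abs_le ?_) hv.2⟩
    · simpa using coupledSteps_eq_one_or_neg_one hs k
    · intro i hi
      obtain ⟨hAi, hin⟩ := mem_Ioc.mp hi
      rw [walk_congr fun k hk => hpadT v k (by omega), walk_congr fun k hk => hpadT v k (by omega),
        ← coupledWalk_eq_walk_coupledSteps_sub hAi.le]
      exact abs_coupledWalk_le hA hs hAi.le
  · funext k
    have hsteps : ∀ j < n, coupledSteps A (padSigns v) j = coupledSteps A (padSigns u) j :=
      fun j hj => by simpa [T, hj] using congrFun huv ⟨j, hj⟩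
    simpa [padSigns] using eq_of_coupledSteps_eq hsteps k k.2

noncomputable def rademacher : Measure ℤ :=
  (1/2 : ℝ≥0∞) • Measure.dirac (1 : ℤ) + (1/2 : ℝ≥0∞) • Measure.dirac (-1 : ℤ)

lemma rademacher_singleton {c : ℤ} (hc : c = 1 ∨ c = -1) : rademacher {c} = 2⁻¹ := by
  rcases hc with rfl | rfl <;> simp [rademacher, Measure.dirac_apply']

section Steps

variable {Ω : Type*} [MeasurableSpace Ω] {P : Measure Ω} {ξ : ℕ → Ω → ℤ}

lemma map_apply_singleton_of_mem_signVectors (hξ : ∀ k, Measurable (ξ k))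
    (hindep : iIndepFun ξ P) (hlaw : ∀ k, P.map (ξ k) = rademacher) {n : ℕ}
    {v : Fin n → ℤ} (hv : v ∈ signVectors n) :
    P.map (fun ω (k : Fin n) => ξ k ω) {v} = 2⁻¹ ^ n := by
  have hcyl : (fun ω (k : Fin n) => ξ k ω) ⁻¹' {v} =
      ⋂ k ∈ (univ : Finset (Fin n)), ξ k ⁻¹' {v k} := by
    ext ω
    simp [funext_iff]
  rw [Measure.map_apply (measurable_pi_lambda (fun ω (k : Fin n) => ξ k ω) fun k => hξ k)
      (measurableSet_singleton v), hcyl,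
    (hindep.precomp Fin.val_injective).measure_inter_preimage_eq_mul _
      fun _ _ => measurableSet_singleton _]
  have hk : ∀ k : Fin n, P (ξ k ⁻¹' {v k}) = 2⁻¹ := fun k => by
    rw [← Measure.map_apply (hξ k) (measurableSet_singleton _), hlaw,
      rademacher_singleton (by simpa [signVectors] using Fintype.mem_piFinset.mp hv k)]
  simp [hk]

lemma measure_setOf_eq_card_mul [IsProbabilityMeasure P] (hξ : ∀ k, Measurable (ξ k))
    (hindep : iIndepFun ξ P) (hlaw : ∀ k, P.map (ξ k) = rademacher) {n : ℕ}
    (Q : (Fin n → ℤ) → Prop) [DecidablePred Q] :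
    P {ω | Q fun k : Fin n => ξ k ω} = #{v ∈ signVectors n | Q v} * 2⁻¹ ^ n := by
  have hX : Measurable fun ω (k : Fin n) => ξ k ω := measurable_pi_lambda _ fun k => hξ k
  set μ := P.map fun ω (k : Fin n) => ξ k ω
  have : IsProbabilityMeasure μ := Measure.isProbabilityMeasure_map hX.aemeasurable
  have hμ : ∀ t : Finset (Fin n → ℤ), t ⊆ signVectors n → μ t = #t * 2⁻¹ ^ n := by
    intro t ht
    rw [← sum_measure_singleton, sum_congr rfl fun v hv =>
      map_apply_singleton_of_mem_signVectors hξ hindep hlaw (ht hv), sum_const, nsmul_eq_mul]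
  have hfull : μ (signVectors n)ᶜ = 0 := by
    rw [prob_compl_eq_zero_iff (Finset.measurableSet _), hμ _ subset_rfl, card_signVectors,
      Nat.cast_pow, ← mul_pow, Nat.cast_ofNat,
      ENNReal.mul_inv_cancel two_ne_zero ENNReal.ofNat_ne_top, one_pow]
  calc P {ω | Q fun k : Fin n => ξ k ω}
      = μ {v | Q v} := (Measure.map_apply hX .of_discrete).symm
    _ = μ ({v | Q v} ∩ signVectors n) := (measure_inter_conull hfull).symm
    _ = #{v ∈ signVectors n | Q v} * 2⁻¹ ^ n := by
      rw [← hμ _ (filter_subset _ _), coe_filter, Set.inter_comm]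
      rfl

end Steps

end RandomWalk

open RandomWalk Finset in
theorem L_doubleprime_stochastically_smaller_general
    {Ω : Type*} [MeasurableSpace Ω] (P : Measure Ω) [IsProbabilityMeasure P]
    (ξ : ℕ → Ω → ℤ)
    (hξm : ∀ k, Measurable (ξ k))
    (hindep : iIndepFun ξ P)
    (hdist : ∀ k, Measure.map (ξ k) P
      = (1/2 : ℝ≥0∞) • Measure.dirac (1 : ℤ) + (1/2 : ℝ≥0∞) • Measure.dirac (-1 : ℤ))
    (S : ℕ → Ω → ℤ) (hS : ∀ i ω, S i ω = ∑ k ∈ Finset.range i, ξ k ω)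
    (A n : ℕ) (hAeven : Even A)
    (L' L'' : Ω → ℝ)
    (hL' : ∀ ω, L' ω = ∑ i ∈ Finset.Ioc A n, ((S i ω : ℝ)) ^ 2 / (i : ℝ) ^ 2)
    (hL'' : ∀ ω, L'' ω = ∑ i ∈ Finset.Ioc A n, ((S i ω - S A ω : ℤ) : ℝ) ^ 2 / (i : ℝ) ^ 2) :
    ∀ y : ℝ, 0 ≤ y → P {ω | L' ω ≤ y} ≤ P {ω | L'' ω ≤ y} := by
  intro y _
  have hwalk : ∀ ω, ∀ i ≤ n, S i ω = walk (padSigns fun k : Fin n => ξ k ω) i :=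
    fun ω i hi => by rw [hS, walk_padSigns_of_le (fun k => ξ k ω) hi]; rfl
  have hL'_eq : ∀ ω, L' ω = weightedSqSum A n (walk (padSigns fun k : Fin n => ξ k ω)) :=
    fun ω => (hL' ω).trans <| sum_congr rfl fun i hi => by rw [hwalk ω i (mem_Ioc.mp hi).2]
  have hL''_eq : ∀ ω, L'' ω = weightedSqSum A n fun i =>
      walk (padSigns fun k : Fin n => ξ k ω) i - walk (padSigns fun k : Fin n => ξ k ω) A :=
    fun ω => (hL'' ω).trans <| sum_congr rfl fun i hi => by
      rw [hwalk ω i (mem_Ioc.mp hi).2, hwalk ω A ((mem_Ioc.mp hi).1.le.trans (mem_Ioc.mp hi).2)]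
  calc P {ω | L' ω ≤ y}
      = #{v ∈ signVectors n | weightedSqSum A n (walk (padSigns v)) ≤ y} * 2⁻¹ ^ n := by
        simp_rw [hL'_eq]
        exact measure_setOf_eq_card_mul hξm hindep hdist
          fun v => weightedSqSum A n (walk (padSigns v)) ≤ y
    _ ≤ #{v ∈ signVectors n |
          weightedSqSum A n (fun i => walk (padSigns v) i - walk (padSigns v) A) ≤ y} *
          2⁻¹ ^ n := by
        gcongr ?_ * _
        exact_mod_cast card_weightedSqSum_le_card_weightedSqSum_sub hAeven y
    _ = P {ω | L'' ω ≤ y} := by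
        simp_rw [hL''_eq]
        exact (measure_setOf_eq_card_mul hξm hindep hdist fun v =>
          weightedSqSum A n (fun i => walk (padSigns v) i - walk (padSigns v) A) ≤ y).symm

/-- For a simple symmetric random walk, `L''_n = ∑_{i=A+1}^n (S_i - S_A)²/i²` is stochastically
smaller than `L'_n = ∑_{i=A+1}^n S_i²/i²`: for every `y ≥ 0`,
`P(L'_n ≤ y) ≤ P(L''_n ≤ y)`. -/
theorem L_doubleprime_stochastically_smaller
    {Ω : Type*} [MeasurableSpace Ω] (P : Measure Ω) [IsProbabilityMeasure P]
    (ξ : ℕ → Ω → ℤ)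
    (hξm : ∀ k, Measurable (ξ k))
    (hindep : iIndepFun ξ P)
    (hdist : ∀ k, Measure.map (ξ k) P
      = (1/2 : ℝ≥0∞) • Measure.dirac (1 : ℤ) + (1/2 : ℝ≥0∞) • Measure.dirac (-1 : ℤ))
    (S : ℕ → Ω → ℤ) (hS : ∀ i ω, S i ω = ∑ k ∈ Finset.range i, ξ k ω)
    (A n : ℕ) (hA : 0 < A) (hAn : A < n) (hAeven : Even A)
    (L' L'' : Ω → ℝ)
    (hL' : ∀ ω, L' ω = ∑ i ∈ Finset.Ioc A n, ((S i ω : ℝ)) ^ 2 / (i : ℝ) ^ 2)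
    (hL'' : ∀ ω, L'' ω = ∑ i ∈ Finset.Ioc A n, ((S i ω - S A ω : ℤ) : ℝ) ^ 2 / (i : ℝ) ^ 2) :
    ∀ y : ℝ, 0 ≤ y → P {ω | L' ω ≤ y} ≤ P {ω | L'' ω ≤ y} :=
  L_doubleprime_stochastically_smaller_general P ξ hξm hindep hdist S hS A n hAeven L' L'' hL' hL''
end
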